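/- Define the scaled Jacobi leading coefficients k_j^{(s)} = (1/(2^j j!))·Γ(2j+s+1)/Γ(j+s+1). Then for any integer p and any sequence κ_n of naturals with κ_n/n → κ > 0, lim_{n→∞} k_{κ_n+p}^{(s)}/k_{κ_n}^{(s)} = 2^p. -/

import Mathlib

/-!
By `Γ(x + 1) = x Γ(x)`, consecutive coefficients have the rational ratio
`k_{j+1}/k_j = (2j+s+1)(2j+s+2) / (2(j+1)(j+s+1))`, which tends to `2`. Telescoping gives
`k_{j+q}/k_j → 2^q` for every fixed `q : ℕ`, and inverting handles negative shifts. Since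
`κ > 0`, the indices `κ_n` tend to infinity, so the limit along them is the same.
-/

open Filter

/-- The leading coefficient of the Jacobi polynomial `P_j^{(s,0)}`:
`k_j^{(s)} = (1/(2^j j!))·Γ(2j+s+1)/Γ(j+s+1)`. -/
noncomputable def kcoef (s : ℝ) (j : ℕ) : ℝ :=
  (1 / ((2 : ℝ) ^ j * (j.factorial : ℝ))) *
    (Real.Gamma (2 * j + s + 1) / Real.Gamma (j + s + 1))

open Topology

section RatioLimit

variable {𝕜 : Type*} [Field 𝕜] [TopologicalSpace 𝕜] [ContinuousMul 𝕜] {f : ℕ → 𝕜} {r : 𝕜}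

theorem tendsto_add_div_of_tendsto_succ_div (hf : ∀ j, f j ≠ 0)
    (h : Tendsto (fun j => f (j + 1) / f j) atTop (𝓝 r)) (q : ℕ) :
    Tendsto (fun j => f (j + q) / f j) atTop (𝓝 (r ^ q)) := by
  induction q with
  | zero => simpa [div_self (hf _)] using tendsto_const_nhds
  | succ q ih =>
    rw [pow_succ']
    refine ((h.comp (tendsto_add_atTop_nat q)).mul ih).congr fun j => ?_
    simp only [Function.comp, ← add_assoc]
    rw [div_mul_div_cancel₀ (hf _)]

theorem tendsto_toNat_add_div_of_tendsto_succ_div [ContinuousInv₀ 𝕜] (hf : ∀ j, f j ≠ 0)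
    (h : Tendsto (fun j => f (j + 1) / f j) atTop (𝓝 r)) (hr : r ≠ 0)
    {u : ℕ → ℕ} (hu : Tendsto u atTop atTop) (p : ℤ) :
    Tendsto (fun n => f ((u n : ℤ) + p).toNat / f (u n)) atTop (𝓝 (r ^ p)) := by
  obtain ⟨q, rfl | rfl⟩ := p.eq_nat_or_neg
  · rw [zpow_natCast]
    refine ((tendsto_add_div_of_tendsto_succ_div hf h q).comp hu).congr fun n => ?_
    simp only [Function.comp]
    congr 3
  · rw [zpow_neg, zpow_natCast]
    have hq := ((tendsto_add_div_of_tendsto_succ_div hf h q).comp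
      ((tendsto_sub_atTop_nat q).comp hu)).inv₀ (pow_ne_zero q hr)
    refine hq.congr' ?_
    filter_upwards [hu.eventually (eventually_ge_atTop q)] with n hn
    simp only [Function.comp, inv_div]
    congr 2 <;> omega

end RatioLimit

theorem tendsto_atTop_of_tendsto_div_natCast {u : ℕ → ℕ} {κ : ℝ} (hκ : 0 < κ)
    (hu : Tendsto (fun n => (u n : ℝ) / n) atTop (𝓝 κ)) : Tendsto u atTop atTop := by
  refine tendsto_natCast_atTop_iff.mp ((hu.pos_mul_atTop hκ tendsto_natCast_atTop_atTop).congr' ?_)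
  filter_upwards [eventually_ne_atTop 0] with n hn
  exact div_mul_cancel₀ _ (Nat.cast_ne_zero.mpr hn)

section kcoef

variable {s : ℝ}

theorem add_add_one_pos (hs : -1 < s) {x : ℝ} (hx : 0 ≤ x) : 0 < x + s + 1 := by
  linarith

theorem kcoef_pos (hs : -1 < s) (j : ℕ) : 0 < kcoef s j := by
  have := Real.Gamma_pos_of_pos (add_add_one_pos hs (by positivity : (0 : ℝ) ≤ 2 * j))
  have := Real.Gamma_pos_of_pos (add_add_one_pos hs j.cast_nonneg)
  unfold kcoef
  positivity

theorem kcoef_succ_div (hs : -1 < s) (j : ℕ) :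
    kcoef s (j + 1) / kcoef s j
      = (2 * j + s + 1) * (2 * j + s + 2) / (2 * (j + 1) * (j + s + 1)) := by
  have h₁ := add_add_one_pos hs j.cast_nonneg
  have h₂ := add_add_one_pos hs (by positivity : (0 : ℝ) ≤ 2 * j)
  have hΓ₁_ne := (Real.Gamma_pos_of_pos h₁).ne'
  have hΓ₂_ne := (Real.Gamma_pos_of_pos h₂).ne'
  have hΓ₁ : Real.Gamma (↑(j + 1) + s + 1) = (j + s + 1) * Real.Gamma (j + s + 1) := by
    rw [show ((j + 1 : ℕ) : ℝ) + s + 1 = (j + s + 1) + 1 by push_cast; ring,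
      Real.Gamma_add_one h₁.ne']
  have hΓ₂ : Real.Gamma (2 * ↑(j + 1) + s + 1)
      = (2 * j + s + 2) * (2 * j + s + 1) * Real.Gamma (2 * j + s + 1) := by
    rw [show 2 * ((j + 1 : ℕ) : ℝ) + s + 1 = (2 * j + s + 2) + 1 by push_cast; ring,
      Real.Gamma_add_one (by linarith), show 2 * (j : ℝ) + s + 2 = (2 * j + s + 1) + 1 by ring,
      Real.Gamma_add_one h₂.ne']
    ring
  unfold kcoef
  rw [hΓ₁, hΓ₂]
  push_cast [Nat.factorial_succ, pow_succ]
  field_simp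

theorem tendsto_kcoef_succ_div (hs : -1 < s) :
    Tendsto (fun j => kcoef s (j + 1) / kcoef s j) atTop (𝓝 2) := by
  have h := (tendsto_add_mul_div_add_mul_atTop_nhds (s + 1) 1 2 one_ne_zero).mul
    (tendsto_add_mul_div_add_mul_atTop_nhds (s + 2) (2 * (s + 1)) 2 two_ne_zero)
  rw [div_one, div_self two_ne_zero, mul_one] at h
  refine h.congr fun j => ?_
  rw [kcoef_succ_div hs, div_mul_div_comm]
  congr 1 <;> ring

end kcoef

/-- For any integer `p` and `κ_n/n → κ > 0`, `k_{κ_n+p}^{(s)}/k_{κ_n}^{(s)} → 2^p`. -/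
theorem kcoef_ratio_limit (s : ℝ) (hs : -1 < s) (p : ℤ) (κ : ℝ) (hκ : 0 < κ)
    (κn : ℕ → ℕ) (hκn : Tendsto (fun n => (κn n : ℝ) / n) atTop (nhds κ)) :
    Tendsto (fun n => kcoef s ((κn n : ℤ) + p).toNat / kcoef s (κn n))
      atTop (nhds ((2 : ℝ) ^ p)) :=
  tendsto_toNat_add_div_of_tendsto_succ_div (fun j => (kcoef_pos hs j).ne')
    (tendsto_kcoef_succ_div hs) two_ne_zero (tendsto_atTop_of_tendsto_div_natCast hκ hκn) p
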